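/- arXiv:1501.01129 — 7 statements merged into one kernel-verified Lean document; each statement's English description precedes it below -/
import Mathlib

section
/- In the polynomial ring k[x₁,x₂,x₃] over a field k, the ideal (x₁x₂, x₂x₃, x₁x₃)·(x₁, x₂x₃)·(x₂, x₁x₃)²·(x₃, x₁x₂)² equals the intersection (x₂,x₃)⁵ ∩ (x₁,x₃)⁴ ∩ (x₁,x₂)⁴ ∩ (x₁,x₂,x₃)⁷. -/
/-!
The ideal `(x_i : i ∈ s)ⁿ` consists of the polynomials all of whose monomials have degree
at least `n` in the variables indexed by `s`. Hence both sides are monomial ideals, and the right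
side contains `x^a y^b z^c` exactly when `b + c ≥ 5`, `a + c ≥ 4`, `a + b ≥ 4`, `a + b + c ≥ 7`.
The left side lies in each power because every generator of each factor has a known least degree
in the relevant variables. Conversely, every exponent vector satisfying the four inequalities
dominates the sum of one generator exponent from each of the six factors, a finite check.
-/

open MvPolynomial

namespace MvPolynomial
variable {σ : Type*} (R : Type*) [CommSemiring R]

noncomputable def degreeOnGeIdeal (s : Finset σ) (n : ℕ) : Ideal (MvPolynomial σ R) :=
  restrictSupportIdeal R {m : σ →₀ ℕ | n ≤ ∑ i ∈ s, m i} fun _ _ hle h =>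
    h.trans (Finset.sum_le_sum fun i _ => hle i)

variable {R} {s : Finset σ} {a b n : ℕ} {p q : MvPolynomial σ R}

theorem mem_degreeOnGeIdeal : p ∈ degreeOnGeIdeal R s n ↔ ∀ m ∈ p.support, n ≤ ∑ i ∈ s, m i :=
  Iff.rfl

theorem monomial_mem_degreeOnGeIdeal {m : σ →₀ ℕ} (h : n ≤ ∑ i ∈ s, m i) (r : R) :
    monomial m r ∈ degreeOnGeIdeal R s n := by
  rw [mem_degreeOnGeIdeal]
  intro m' hm'
  rwa [Finset.mem_singleton.mp (support_monomial_subset hm')]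

theorem mul_mem_degreeOnGeIdeal (hp : p ∈ degreeOnGeIdeal R s a)
    (hq : q ∈ degreeOnGeIdeal R s b) : p * q ∈ degreeOnGeIdeal R s (a + b) := by
  classical
  intro m hm
  obtain ⟨u, hu, v, hv, rfl⟩ := Finset.mem_add.mp (support_mul p q hm)
  simpa only [Set.mem_ofPred_eq, Finsupp.add_apply, Finset.sum_add_distrib] using
    add_le_add (hp hu) (hq hv)

theorem mul_le_degreeOnGeIdeal {I J : Ideal (MvPolynomial σ R)} (hI : I ≤ degreeOnGeIdeal R s a)
    (hJ : J ≤ degreeOnGeIdeal R s b) : I * J ≤ degreeOnGeIdeal R s (a + b) :=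
  Ideal.mul_le.mpr fun _ hp _ hq => mul_mem_degreeOnGeIdeal (hI hp) (hJ hq)

theorem pow_le_degreeOnGeIdeal {I : Ideal (MvPolynomial σ R)} (hI : I ≤ degreeOnGeIdeal R s a) :
    ∀ k : ℕ, I ^ k ≤ degreeOnGeIdeal R s (k * a)
  | 0 => fun p _ => by simp [mem_degreeOnGeIdeal]
  | k + 1 => by
    rw [pow_succ, add_mul, one_mul]
    exact mul_le_degreeOnGeIdeal (pow_le_degreeOnGeIdeal hI k) hI

theorem span_X_le_degreeOnGeIdeal : Ideal.span (X '' ↑s) ≤ degreeOnGeIdeal R s 1 := by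
  classical
  rw [Ideal.span_le]
  rintro _ ⟨i, hi, rfl⟩
  exact monomial_mem_degreeOnGeIdeal (by simp [Finsupp.single_apply, Finset.mem_coe.mp hi]) 1

theorem monomial_mem_span_X_pow {m : σ →₀ ℕ} (h : n ≤ ∑ i ∈ s, m i) (r : R) :
    monomial m r ∈ Ideal.span (X '' ↑s) ^ n := by
  classical
  induction n generalizing m with
  | zero => simp
  | succ n ih =>
    obtain ⟨i, hi, hmi⟩ := Finset.exists_ne_zero_of_sum_ne_zero (by omega : ∑ i ∈ s, m i ≠ 0)
    obtain ⟨m', rfl⟩ :=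
      le_iff_exists_add'.mp (Finsupp.single_le_iff.mpr (Nat.one_le_iff_ne_zero.mpr hmi))
    rw [monomial_add_single, pow_one, pow_succ]
    refine Ideal.mul_mem_mul (ih ?_) (Ideal.subset_span ⟨i, hi, rfl⟩)
    simpa [Finset.sum_add_distrib, Finsupp.single_apply, hi] using h

theorem span_X_pow_eq_degreeOnGeIdeal (s : Finset σ) (n : ℕ) :
    Ideal.span (X '' ↑s) ^ n = degreeOnGeIdeal R s n := by
  refine le_antisymm (by simpa using pow_le_degreeOnGeIdeal span_X_le_degreeOnGeIdeal n) ?_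
  intro p hp
  rw [p.as_sum]
  exact Ideal.sum_mem _ fun m hm => monomial_mem_span_X_pow (hp hm) _

end MvPolynomial

namespace Hironaka

-- Exponent vectors `(a, b, c)` of the generators `x^a y^b z^c` of the four factors.
def gens₁ : List (ℕ × ℕ × ℕ) := [(1, 1, 0), (0, 1, 1), (1, 0, 1)]
def gens₂ : List (ℕ × ℕ × ℕ) := [(1, 0, 0), (0, 1, 1)]
def gens₃ : List (ℕ × ℕ × ℕ) := [(0, 1, 0), (1, 0, 1)]
def gens₄ : List (ℕ × ℕ × ℕ) := [(0, 0, 1), (1, 1, 0)]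

set_option synthInstance.maxSize 2000 in
theorem exists_gens_le_of_lt_seven : ∀ a < 7, ∀ b < 7, ∀ c < 7,
    5 ≤ b + c → 4 ≤ a + c → 4 ≤ a + b → 7 ≤ a + b + c →
    ∃ e₁ ∈ gens₁, ∃ e₂ ∈ gens₂, ∃ e₃ ∈ gens₃, ∃ e₄ ∈ gens₃, ∃ e₅ ∈ gens₄, ∃ e₆ ∈ gens₄,
      e₁ + e₂ + (e₃ + e₄) + (e₅ + e₆) ≤ (a, b, c) := by
  decide

theorem exists_gens_le {a b c : ℕ} (hbc : 5 ≤ b + c) (hac : 4 ≤ a + c) (hab : 4 ≤ a + b)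
    (habc : 7 ≤ a + b + c) :
    ∃ e₁ ∈ gens₁, ∃ e₂ ∈ gens₂, ∃ e₃ ∈ gens₃, ∃ e₄ ∈ gens₃, ∃ e₅ ∈ gens₄, ∃ e₆ ∈ gens₄,
      e₁ + e₂ + (e₃ + e₄) + (e₅ + e₆) ≤ (a, b, c) := by
  -- Generator exponents are at most `1` in each coordinate, so capping at `6` loses nothing.
  obtain ⟨e₁, h₁, e₂, h₂, e₃, h₃, e₄, h₄, e₅, h₅, e₆, h₆, hle⟩ :=
    exists_gens_le_of_lt_seven (min a 6) (by omega) (min b 6) (by omega) (min c 6) (by omega)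
      (by omega) (by omega) (by omega) (by omega)
  exact ⟨e₁, h₁, e₂, h₂, e₃, h₃, e₄, h₄, e₅, h₅, e₆, h₆,
    hle.trans (by simp [Prod.mk_le_mk])⟩

variable {R : Type*} [CommSemiring R]

noncomputable def monomialOfTriple (e : ℕ × ℕ × ℕ) : MvPolynomial (Fin 3) R :=
  X 0 ^ e.1 * X 1 ^ e.2.1 * X 2 ^ e.2.2

theorem monomialOfTriple_add (e f : ℕ × ℕ × ℕ) :
    (monomialOfTriple (e + f) : MvPolynomial (Fin 3) R) =
      monomialOfTriple e * monomialOfTriple f := by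
  simp only [monomialOfTriple, Prod.fst_add, Prod.snd_add, pow_add]
  ring

theorem monomialOfTriple_dvd {e f : ℕ × ℕ × ℕ} (h : e ≤ f) :
    (monomialOfTriple e : MvPolynomial (Fin 3) R) ∣ monomialOfTriple f :=
  mul_dvd_mul (mul_dvd_mul (pow_dvd_pow _ h.1) (pow_dvd_pow _ h.2.1)) (pow_dvd_pow _ h.2.2)

theorem monomial_eq_C_mul_monomialOfTriple (m : Fin 3 →₀ ℕ) (r : R) :
    monomial m r = C r * monomialOfTriple (m 0, m 1, m 2) := by
  rw [monomial_eq, Finsupp.prod_fintype _ _ (fun _ => pow_zero _), Fin.prod_univ_three,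
    monomialOfTriple]

variable (R) in
noncomputable def hironakaIdeal : Ideal (MvPolynomial (Fin 3) R) :=
  Ideal.span {X 0 * X 1, X 1 * X 2, X 0 * X 2} * Ideal.span {X 0, X 1 * X 2} *
    Ideal.span {X 1, X 0 * X 2} ^ 2 * Ideal.span {X 2, X 0 * X 1} ^ 2

theorem monomialOfTriple_mem_hironakaIdeal {e₁ e₂ e₃ e₄ e₅ e₆ : ℕ × ℕ × ℕ} (h₁ : e₁ ∈ gens₁)
    (h₂ : e₂ ∈ gens₂) (h₃ : e₃ ∈ gens₃) (h₄ : e₄ ∈ gens₃) (h₅ : e₅ ∈ gens₄) (h₆ : e₆ ∈ gens₄) :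
    monomialOfTriple (e₁ + e₂ + (e₃ + e₄) + (e₅ + e₆)) ∈ hironakaIdeal R := by
  simp only [monomialOfTriple_add, hironakaIdeal, sq]
  simp only [gens₁, gens₂, gens₃, gens₄, List.mem_cons, List.not_mem_nil,
    or_false] at h₁ h₂ h₃ h₄ h₅ h₆
  refine Ideal.mul_mem_mul (Ideal.mul_mem_mul (Ideal.mul_mem_mul ?_ ?_) (Ideal.mul_mem_mul ?_ ?_))
    (Ideal.mul_mem_mul ?_ ?_) <;> apply Ideal.subset_span
  · rcases h₁ with rfl | rfl | rfl <;> simp [monomialOfTriple]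
  · rcases h₂ with rfl | rfl <;> simp [monomialOfTriple]
  · rcases h₃ with rfl | rfl <;> simp [monomialOfTriple]
  · rcases h₄ with rfl | rfl <;> simp [monomialOfTriple]
  · rcases h₅ with rfl | rfl <;> simp [monomialOfTriple]
  · rcases h₆ with rfl | rfl <;> simp [monomialOfTriple]

theorem monomial_mem_hironakaIdeal {m : Fin 3 →₀ ℕ} (hbc : 5 ≤ m 1 + m 2) (hac : 4 ≤ m 0 + m 2)
    (hab : 4 ≤ m 0 + m 1) (habc : 7 ≤ m 0 + m 1 + m 2) (r : R) :
    monomial m r ∈ hironakaIdeal R := by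
  obtain ⟨e₁, h₁, e₂, h₂, e₃, h₃, e₄, h₄, e₅, h₅, e₆, h₆, hle⟩ := exists_gens_le hbc hac hab habc
  rw [monomial_eq_C_mul_monomialOfTriple]
  exact Ideal.mul_mem_left _ _ <| Ideal.mem_of_dvd _ (monomialOfTriple_dvd hle)
    (monomialOfTriple_mem_hironakaIdeal h₁ h₂ h₃ h₄ h₅ h₆)
theorem inf_degreeOnGeIdeal_le_hironakaIdeal :
    degreeOnGeIdeal R {1, 2} 5 ⊓ degreeOnGeIdeal R {0, 2} 4 ⊓ degreeOnGeIdeal R {0, 1} 4 ⊓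
      degreeOnGeIdeal R {0, 1, 2} 7 ≤ hironakaIdeal R := by
  rintro p ⟨⟨⟨h₁, h₂⟩, h₃⟩, h₄⟩
  rw [p.as_sum]
  refine Ideal.sum_mem _ fun m hm => monomial_mem_hironakaIdeal ?_ ?_ ?_ ?_ _
  · simpa using h₁ hm
  · simpa using h₂ hm
  · simpa using h₃ hm
  · simpa [add_assoc] using h₄ hm

theorem hironakaIdeal_le_degreeOnGeIdeal (s : Finset (Fin 3)) {a b c d : ℕ}
    (h₁ : Ideal.span {X 0 * X 1, X 1 * X 2, X 0 * X 2} ≤ degreeOnGeIdeal R s a)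
    (h₂ : Ideal.span {X 0, X 1 * X 2} ≤ degreeOnGeIdeal R s b)
    (h₃ : Ideal.span {X 1, X 0 * X 2} ≤ degreeOnGeIdeal R s c)
    (h₄ : Ideal.span {X 2, X 0 * X 1} ≤ degreeOnGeIdeal R s d) :
    hironakaIdeal R ≤ degreeOnGeIdeal R s (a + b + 2 * c + 2 * d) :=
  mul_le_degreeOnGeIdeal (mul_le_degreeOnGeIdeal (mul_le_degreeOnGeIdeal h₁ h₂)
    (pow_le_degreeOnGeIdeal h₃ 2)) (pow_le_degreeOnGeIdeal h₄ 2)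

theorem hironakaIdeal_le_inf_degreeOnGeIdeal :
    hironakaIdeal R ≤ degreeOnGeIdeal R {1, 2} 5 ⊓ degreeOnGeIdeal R {0, 2} 4 ⊓
      degreeOnGeIdeal R {0, 1} 4 ⊓ degreeOnGeIdeal R {0, 1, 2} 7 := by
  refine le_inf (le_inf (le_inf
    (hironakaIdeal_le_degreeOnGeIdeal (a := 1) (b := 0) (c := 1) (d := 1) _ ?_ ?_ ?_ ?_)
    (hironakaIdeal_le_degreeOnGeIdeal (a := 1) (b := 1) (c := 0) (d := 1) _ ?_ ?_ ?_ ?_))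
    (hironakaIdeal_le_degreeOnGeIdeal (a := 1) (b := 1) (c := 1) (d := 0) _ ?_ ?_ ?_ ?_))
    (hironakaIdeal_le_degreeOnGeIdeal (a := 2) (b := 1) (c := 1) (d := 1) _ ?_ ?_ ?_ ?_)
  all_goals
    simp only [Ideal.span_le, Set.insert_subset_iff, Set.singleton_subset_iff, SetLike.mem_coe,
      X, monomial_mul, mul_one]
    and_intros <;> exact monomial_mem_degreeOnGeIdeal (by simp [Finsupp.single_apply]) _

end Hironaka

open Hironaka in
/-- Hironaka's ideal identity: in `k[x₁,x₂,x₃]`,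
`(x₁x₂, x₂x₃, x₁x₃)·(x₁, x₂x₃)·(x₂, x₁x₃)²·(x₃, x₁x₂)²
  = (x₂,x₃)⁵ ∩ (x₁,x₃)⁴ ∩ (x₁,x₂)⁴ ∩ (x₁,x₂,x₃)⁷`. -/
theorem stmt_0 (k : Type*) [Field k] :
    (Ideal.span {X 0 * X 1, X 1 * X 2, X 0 * X 2} :
        Ideal (MvPolynomial (Fin 3) k)) *
      Ideal.span {X 0, X 1 * X 2} *
      Ideal.span {X 1, X 0 * X 2} ^ 2 *
      Ideal.span {X 2, X 0 * X 1} ^ 2 =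
    Ideal.span {X 1, X 2} ^ 5 ⊓ Ideal.span {X 0, X 2} ^ 4 ⊓
      Ideal.span {X 0, X 1} ^ 4 ⊓ Ideal.span {X 0, X 1, X 2} ^ 7 := by
  simpa [hironakaIdeal, ← span_X_pow_eq_degreeOnGeIdeal, Set.image_insert_eq] using
    le_antisymm (hironakaIdeal_le_inf_degreeOnGeIdeal (R := k))
      inf_degreeOnGeIdeal_le_hironakaIdeal
end

section
/- In the polynomial ring k[x₁,x₂,x₃] over a field k, the ideal (x₂,x₃)⁵ ∩ (x₁,x₃)⁴ equals the product ideal (x₁x₂, x₃)⁴ · (x₂, x₃). -/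
/-!
Both sides are monomial ideals. A monomial `x^μ` lies in `(x₂,x₃)^(n+1) ⊓ (x₁,x₃)^n` exactly when
`μ₂ + μ₃ ≥ n + 1` and `μ₁ + μ₃ ≥ n`; it is then divisible by `x₃^n · x₃` if `μ₃ > n`, and otherwise
by `(x₁x₂)^(n - μ₃) x₃^μ₃ · x₂`, both of which lie in `(x₁x₂,x₃)^n (x₂,x₃)`. Conversely
`(x₁x₂,x₃)` is contained in both `(x₂,x₃)` and `(x₁,x₃)`.
-/

open MvPolynomial

namespace MvPolynomial

variable {σ R : Type*} [CommSemiring R]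

theorem span_X_image_pow (s : Set σ) (n : ℕ) :
    Ideal.span (X '' s : Set (MvPolynomial σ R)) ^ n =
      Ideal.span ((monomial · 1) '' {ν : σ →₀ ℕ | ν.degree = n ∧ ↑ν.support ⊆ s}) := by
  rw [Ideal.span, Submodule.span_pow, Finsupp.image_pow_eq_finsuppProd_image]
  simp [monomial_eq]

theorem le_sum_of_mem_span_X_image_pow {s : Finset σ} {n : ℕ} {f : MvPolynomial σ R}
    (hf : f ∈ Ideal.span (X '' ↑s) ^ n) {μ : σ →₀ ℕ} (hμ : μ ∈ f.support) :
    n ≤ ∑ i ∈ s, μ i := by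
  rw [span_X_image_pow, mem_ideal_span_monomial_image] at hf
  obtain ⟨ν, ⟨rfl, hνs⟩, hνμ⟩ := hf μ hμ
  calc ν.degree = ∑ i ∈ s, ν i :=
        Finset.sum_subset hνs fun i _ hi => Finsupp.notMem_support_iff.mp hi
    _ ≤ ∑ i ∈ s, μ i := Finset.sum_le_sum fun i _ => hνμ i

theorem add_le_of_mem_span_X_pair_pow {i j : σ} (hij : i ≠ j) {n : ℕ} {f : MvPolynomial σ R}
    (hf : f ∈ Ideal.span {X i, X j} ^ n) {μ : σ →₀ ℕ} (hμ : μ ∈ f.support) :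
    n ≤ μ i + μ j := by
  classical
  rw [← Finset.sum_pair hij]
  refine le_sum_of_mem_span_X_image_pow ?_ hμ
  simpa [Set.image_pair] using hf

end MvPolynomial

section

variable {R : Type*} [CommSemiring R]

theorem monomial_mem_span_X_mul_X_X_pow_mul (n : ℕ) {μ : Fin 3 →₀ ℕ}
    (h₁ : n + 1 ≤ μ 1 + μ 2) (h₀ : n ≤ μ 0 + μ 2) :
    monomial μ (1 : R) ∈ Ideal.span {X 0 * X 1, X 2} ^ n * Ideal.span {X 1, X 2} := by
  have hJ₀₁ : (X 0 * X 1 : MvPolynomial (Fin 3) R) ∈ Ideal.span {X 0 * X 1, X 2} :=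
    Ideal.subset_span (by simp)
  have hJ₂ : (X 2 : MvPolynomial (Fin 3) R) ∈ Ideal.span {X 0 * X 1, X 2} :=
    Ideal.subset_span (by simp)
  have hP₁ : (X 1 : MvPolynomial (Fin 3) R) ∈ Ideal.span {X 1, X 2} := Ideal.subset_span (by simp)
  have hP₂ : (X 2 : MvPolynomial (Fin 3) R) ∈ Ideal.span {X 1, X 2} := Ideal.subset_span (by simp)
  rw [monomial_eq, C_1, one_mul, Finsupp.prod_fintype _ _ (by simp), Fin.prod_univ_three]
  rcases le_or_gt (n + 1) (μ 2) with h₂ | h₂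
  · obtain ⟨a, ha⟩ := Nat.exists_eq_add_of_le h₂
    rw [ha]
    have := Ideal.mul_mem_mul (Ideal.pow_mem_pow hJ₂ n) hP₂
    convert Ideal.mul_mem_left _ (X 0 ^ μ 0 * X 1 ^ μ 1 * X 2 ^ a) this using 1
    ring
  · obtain ⟨a, ha⟩ := Nat.exists_eq_add_of_le (show n - μ 2 ≤ μ 0 by omega)
    obtain ⟨b, hb⟩ := Nat.exists_eq_add_of_le (show n - μ 2 + 1 ≤ μ 1 by omega)
    have hgen : (X 0 * X 1) ^ (n - μ 2) * X 2 ^ μ 2 ∈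
        (Ideal.span {X 0 * X 1, X 2} : Ideal (MvPolynomial (Fin 3) R)) ^ n := by
      have := Ideal.mul_mem_mul (Ideal.pow_mem_pow hJ₀₁ (n - μ 2)) (Ideal.pow_mem_pow hJ₂ (μ 2))
      rwa [← pow_add, Nat.sub_add_cancel (Nat.lt_succ_iff.mp h₂)] at this
    rw [ha, hb]
    convert Ideal.mul_mem_left _ (X 0 ^ a * X 1 ^ b) (Ideal.mul_mem_mul hgen hP₁) using 1
    ring

theorem span_X_pair_pow_succ_inf_span_X_pair_pow (n : ℕ) :
    (Ideal.span {X 1, X 2} : Ideal (MvPolynomial (Fin 3) R)) ^ (n + 1) ⊓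
        Ideal.span {X 0, X 2} ^ n =
      Ideal.span {X 0 * X 1, X 2} ^ n * Ideal.span {X 1, X 2} := by
  refine le_antisymm ?_ (le_inf ?_ ?_)
  · have hmon : Ideal.span ((monomial · (1 : R)) ''
        {μ : Fin 3 →₀ ℕ | n + 1 ≤ μ 1 + μ 2 ∧ n ≤ μ 0 + μ 2}) ≤
          Ideal.span {X 0 * X 1, X 2} ^ n * Ideal.span {X 1, X 2} :=
      Ideal.span_le.mpr <| Set.image_subset_iff.mpr fun μ hμ =>
        monomial_mem_span_X_mul_X_X_pow_mul n hμ.1 hμ.2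
    refine le_trans (fun f hf => ?_) hmon
    obtain ⟨h₁, h₀⟩ := Ideal.mem_inf.mp hf
    exact mem_ideal_span_monomial_image.mpr fun μ hμ =>
      ⟨μ, ⟨add_le_of_mem_span_X_pair_pow (by decide) h₁ hμ,
        add_le_of_mem_span_X_pair_pow (by decide) h₀ hμ⟩, le_rfl⟩
  · rw [pow_succ]
    refine Ideal.mul_mono_left (Ideal.pow_right_mono ?_ n)
    exact Ideal.span_le.mpr <| Set.pair_subset
      (Ideal.mul_mem_left _ _ (Ideal.subset_span (by simp))) (Ideal.subset_span (by simp))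
  · refine Ideal.mul_le_left.trans (Ideal.pow_right_mono ?_ n)
    exact Ideal.span_le.mpr <| Set.pair_subset
      (Ideal.mul_mem_right _ _ (Ideal.subset_span (by simp))) (Ideal.subset_span (by simp))

end

/-- In `k[x₁,x₂,x₃]`: `(x₂,x₃)⁵ ∩ (x₁,x₃)⁴ = (x₁x₂, x₃)⁴·(x₂,x₃)`. -/
theorem stmt_2 (k : Type*) [Field k] :
    ((Ideal.span {X 1, X 2} : Ideal (MvPolynomial (Fin 3) k)) ^ 5 ⊓
        Ideal.span {X 0, X 2} ^ 4) =
      Ideal.span {X 0 * X 1, X 2} ^ 4 * Ideal.span {X 1, X 2} :=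
  span_X_pair_pow_succ_inf_span_X_pair_pow 4
end

section
/- In k[x,y,u,v], the ideal generated by xu − yv, xv − yu, yu − yv is a radical ideal, and it equals the intersection of the three prime ideals (u,v), (x,y), and (x−y, u−v). -/
/-! Each of the three ideals is the kernel of a substitution `k[x,y,u,v] → k[x,y,u,v]`, hence
prime, so their intersection is radical and it suffices to prove `I = (u,v) ∩ (x,y) ∩ (x-y,u-v)`.
The monomial ideal `(u,v) ∩ (x,y)` is `(x,y)(u,v)`, and modulo `I` each of `xu, xv, yu, yv` is
congruent to `xu`; hence `(u,v) ∩ (x,y) ⊆ I + (xu)`. If `g + r xu` with `g ∈ I` lies in the prime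
`(x-y,u-v)`, which contains `I` but not `xu`, then `r ∈ (x-y,u-v)`, and `(x-y,u-v) xu ⊆ I`. -/

open MvPolynomial

theorem MvPolynomial.span_X_image_inf_span_X_image_le_mul {σ R : Type*} [CommSemiring R]
    {s t : Set σ} (hst : Disjoint s t) :
    Ideal.span (X '' s) ⊓ Ideal.span (X '' t) ≤
      (Ideal.span (X '' s) * Ideal.span (X '' t) : Ideal (MvPolynomial σ R)) := by
  intro f hf
  rw [Submodule.mem_inf, mem_ideal_span_X_image, mem_ideal_span_X_image] at hf
  rw [f.as_sum]
  refine Ideal.sum_mem _ fun m hm => ?_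
  obtain ⟨i, hi, hmi⟩ := hf.1 m hm
  obtain ⟨j, hj, hmj⟩ := hf.2 m hm
  have hij : i ≠ j := hst.ne_of_mem hi hj
  have hle : Finsupp.single i 1 + Finsupp.single j 1 ≤ m := fun a => by
    classical
    simp only [Finsupp.add_apply, Finsupp.single_apply]
    grind
  obtain ⟨d, rfl⟩ := le_iff_exists_add.mp hle
  rw [add_comm, ← add_assoc, monomial_add_single, monomial_add_single, pow_one, pow_one, mul_assoc]
  exact Ideal.mul_mem_left _ _ (Ideal.mul_mem_mul (Ideal.subset_span ⟨i, hi, rfl⟩)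
    (Ideal.subset_span ⟨j, hj, rfl⟩))

theorem Ideal.sup_span_singleton_inf_le {R : Type*} [CommRing R] {I P : Ideal R} [P.IsPrime]
    {a : R} (hIP : I ≤ P) (ha : a ∉ P) (hPa : P * Ideal.span {a} ≤ I) :
    (I ⊔ Ideal.span {a}) ⊓ P ≤ I := by
  rintro f ⟨hf, hfP⟩
  obtain ⟨i, hi, b, hb, rfl⟩ := Submodule.mem_sup.mp hf
  obtain ⟨r, rfl⟩ := Ideal.mem_span_singleton'.mp hb
  have hr : r ∈ P :=
    (‹P.IsPrime›.mem_or_mem ((P.add_mem_iff_right (hIP hi)).mp hfP)).resolve_right ha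
  exact I.add_mem hi (hPa (Ideal.mul_mem_mul hr (Ideal.mem_span_singleton_self a)))

theorem MvPolynomial.span_eq_ker_of_X_sub_mem {σ R : Type*} [CommRing R]
    (S : Set (MvPolynomial σ R)) (φ : MvPolynomial σ R →ₐ[R] MvPolynomial σ R)
    (hφ : ∀ s ∈ S, φ s = 0) (hX : ∀ i, X i - φ (X i) ∈ Ideal.span S) :
    Ideal.span S = RingHom.ker φ := by
  refine le_antisymm (Ideal.span_le.mpr hφ) fun f hf => ?_
  -- `φ` induces the identity modulo `span S`, so `f ≡ φ f = 0`.
  have hmk : (Ideal.Quotient.mkₐ R (Ideal.span S)).comp φ = Ideal.Quotient.mkₐ R _ :=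
    algHom_ext fun i => (Ideal.Quotient.mk_eq_mk_iff_sub_mem _ _).mpr (hX i) |>.symm
  have := AlgHom.congr_fun hmk f
  rw [AlgHom.comp_apply, RingHom.mem_ker.mp hf, map_zero, Ideal.Quotient.mkₐ_eq_mk,
    eq_comm, Ideal.Quotient.eq_zero_iff_mem] at this
  exact this

theorem Ideal.mem_span_triple_of_eq {R : Type*} [CommSemiring R] {a b c f : R} (p q r : R)
    (h : f = p * a + q * b + r * c) : f ∈ Ideal.span {a, b, c} :=
  Ideal.mem_span_insert.mpr ⟨p, q * b + r * c, Ideal.mem_span_pair.mpr ⟨q, r, rfl⟩, by rw [h]; ring⟩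

namespace ThreePlanes

variable {k : Type*} [Field k]

open Ideal

local notation "x" => (X 0 : MvPolynomial (Fin 4) k)
local notation "y" => (X 1 : MvPolynomial (Fin 4) k)
local notation "u" => (X 2 : MvPolynomial (Fin 4) k)
local notation "v" => (X 3 : MvPolynomial (Fin 4) k)

local notation "𝓘" => (Ideal.span {x * u - y * v, x * v - y * u, y * u - y * v} :
  Ideal (MvPolynomial (Fin 4) k))
local notation "𝔭₁" => (Ideal.span {u, v} : Ideal (MvPolynomial (Fin 4) k))
local notation "𝔭₂" => (Ideal.span {x, y} : Ideal (MvPolynomial (Fin 4) k))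
local notation "𝔭₃" => (Ideal.span {x - y, u - v} : Ideal (MvPolynomial (Fin 4) k))

theorem span_le_inf : 𝓘 ≤ 𝔭₁ ⊓ 𝔭₂ ⊓ 𝔭₃ := by
  simp only [Ideal.span_le, Set.insert_subset_iff, Set.singleton_subset_iff, SetLike.mem_coe,
    Submodule.mem_inf, Ideal.mem_span_pair]
  refine ⟨⟨⟨⟨x, -y, ?_⟩, ⟨u, -v, ?_⟩⟩, ⟨u, y, ?_⟩⟩, ⟨⟨⟨-y, x, ?_⟩, ⟨v, -u, ?_⟩⟩, ⟨v, -y, ?_⟩⟩,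
    ⟨⟨⟨y, -y, ?_⟩, ⟨0, u - v, ?_⟩⟩, ⟨0, y, ?_⟩⟩⟩ <;> ring

theorem isPrime_span_u_v : Ideal.IsPrime 𝔭₁ := by
  rw [span_eq_ker_of_X_sub_mem _ (aeval ![x, y, 0, 0])]
  · exact RingHom.ker_isPrime _
  · rintro s (rfl | rfl) <;> simp
  · intro i
    fin_cases i <;> simp <;> exact Ideal.subset_span (by simp)

theorem isPrime_span_x_y : Ideal.IsPrime 𝔭₂ := by
  rw [span_eq_ker_of_X_sub_mem _ (aeval ![0, 0, u, v])]
  · exact RingHom.ker_isPrime _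
  · rintro s (rfl | rfl) <;> simp
  · intro i
    fin_cases i <;> simp <;> exact Ideal.subset_span (by simp)

theorem span_diagonal_eq_ker :
    𝔭₃ = RingHom.ker (aeval ![y, y, v, v] : MvPolynomial (Fin 4) k →ₐ[k] _) := by
  apply span_eq_ker_of_X_sub_mem
  · rintro s (rfl | rfl) <;> simp
  · intro i
    fin_cases i <;> simp <;> exact Ideal.subset_span (by simp)

theorem isPrime_span_diagonal : Ideal.IsPrime 𝔭₃ := by
  rw [span_diagonal_eq_ker]
  exact RingHom.ker_isPrime _

theorem inf_le_sup_span_x_mul_u : 𝔭₁ ⊓ 𝔭₂ ≤ 𝓘 ⊔ Ideal.span {x * u} := by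
  have hmem : ∀ f, f - x * u ∈ 𝓘 → f ∈ 𝓘 ⊔ Ideal.span {x * u} := fun f hf => by
    simpa using Ideal.add_mem _ (Ideal.mem_sup_left hf)
      (Ideal.mem_sup_right (Ideal.mem_span_singleton_self (x * u)))
  calc 𝔭₁ ⊓ 𝔭₂ = Ideal.span (X '' {2, 3}) ⊓ Ideal.span (X '' {0, 1}) := by
        rw [Set.image_pair, Set.image_pair]
    _ ≤ Ideal.span (X '' {2, 3}) * Ideal.span (X '' {0, 1}) :=
        span_X_image_inf_span_X_image_le_mul (by simp [Set.disjoint_left])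
    _ = Ideal.span {u * x, u * y, v * x, v * y} := by
        rw [Set.image_pair, Set.image_pair, Ideal.span_pair_mul_span_pair]
    _ ≤ 𝓘 ⊔ Ideal.span {x * u} := by
        simp only [Ideal.span_le, Set.insert_subset_iff, Set.singleton_subset_iff, SetLike.mem_coe]
        refine ⟨hmem _ (mem_span_triple_of_eq 0 0 0 ?_),
          hmem _ (mem_span_triple_of_eq (-1) 0 1 ?_), hmem _ (mem_span_triple_of_eq (-1) 1 1 ?_),
          hmem _ (mem_span_triple_of_eq (-1) 0 0 ?_)⟩ <;> ring

theorem x_mul_u_notMem_span_diagonal : x * u ∉ 𝔭₃ := by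
  rw [span_diagonal_eq_ker, RingHom.mem_ker]
  simp [X_ne_zero]

theorem span_diagonal_mul_span_x_mul_u_le : 𝔭₃ * Ideal.span {x * u} ≤ 𝓘 := by
  rw [Ideal.span_mul_span', Set.mul_singleton, Set.image_pair]
  simp only [Ideal.span_le, Set.insert_subset_iff, Set.singleton_subset_iff, SetLike.mem_coe]
  exact ⟨mem_span_triple_of_eq x 0 (-x) (by ring), mem_span_triple_of_eq u (-u) (-u) (by ring)⟩

theorem span_eq_inf : 𝓘 = 𝔭₁ ⊓ 𝔭₂ ⊓ 𝔭₃ := by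
  have := isPrime_span_diagonal (k := k)
  refine le_antisymm span_le_inf ?_
  calc 𝔭₁ ⊓ 𝔭₂ ⊓ 𝔭₃ ≤ (𝓘 ⊔ Ideal.span {x * u}) ⊓ 𝔭₃ :=
        inf_le_inf_right _ inf_le_sup_span_x_mul_u
    _ ≤ 𝓘 := Ideal.sup_span_singleton_inf_le (span_le_inf.trans inf_le_right)
        x_mul_u_notMem_span_diagonal span_diagonal_mul_span_x_mul_u_le

end ThreePlanes

/-- In `k[x,y,u,v]` (with `x = X 0`, `y = X 1`, `u = X 2`, `v = X 3`),
the ideal `(xu − yv, xv − yu, yu − yv)` is radical and equals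
`(u,v) ∩ (x,y) ∩ (x−y, u−v)`. -/
theorem stmt_5 (k : Type*) [Field k] :
    (Ideal.span {X 0 * X 2 - X 1 * X 3, X 0 * X 3 - X 1 * X 2,
        X 1 * X 2 - X 1 * X 3} : Ideal (MvPolynomial (Fin 4) k)).IsRadical ∧
    (Ideal.span {X 0 * X 2 - X 1 * X 3, X 0 * X 3 - X 1 * X 2,
        X 1 * X 2 - X 1 * X 3} : Ideal (MvPolynomial (Fin 4) k)) =
      Ideal.span {X 2, X 3} ⊓ Ideal.span {X 0, X 1} ⊓
        Ideal.span {X 0 - X 1, X 2 - X 3} := by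
  refine ⟨?_, ThreePlanes.span_eq_inf⟩
  rw [ThreePlanes.span_eq_inf]
  exact ((ThreePlanes.isPrime_span_u_v.isRadical.inf ThreePlanes.isPrime_span_x_y.isRadical).inf
    ThreePlanes.isPrime_span_diagonal.isRadical)
end

section
/- If φ ∈ k[s,x,y,z] can be written both as φ = a·x + b·y and as φ = c·(x−s) + d·z for some a,b,c,d ∈ k[s,x,y,z], then φ belongs to the square of the maximal ideal (s,x,y,z). -/
/-! Comparing the coefficients of the linear monomials `s`, `x`, `y` in the two expressions gives
`c(0) = 0`, then `a(0) = c(0) = 0` and `b(0) = 0`. So `a` and `b` lie in `𝔪`, and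
`φ = a·x + b·y ∈ 𝔪·𝔪`. -/

open MvPolynomial

namespace MvPolynomial

variable {R σ : Type*} [CommSemiring R]

theorem mem_idealOfVars_iff (p : MvPolynomial σ R) :
    p ∈ idealOfVars σ R ↔ constantCoeff p = 0 := by
  rw [← pow_one (idealOfVars σ R), mem_pow_idealOfVars_iff']
  simp [Finsupp.degree_eq_zero_iff, constantCoeff_eq]

theorem coeff_single_one_mul_X [DecidableEq σ] (p : MvPolynomial σ R) (i j : σ) :
    coeff (Finsupp.single j 1) (p * X i) = if i = j then constantCoeff p else 0 := by
  rw [coeff_mul_X']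
  split_ifs <;> simp_all [constantCoeff_eq]

theorem idealOfVars_fin_four :
    idealOfVars (Fin 4) R = Ideal.span {X 0, X 1, X 2, X 3} := by
  rw [idealOfVars]
  congr 1
  ext
  simp [Fin.exists_fin_succ, eq_comm]

theorem mul_X_mem_idealOfVars_sq {p : MvPolynomial σ R} (hp : constantCoeff p = 0) (i : σ) :
    p * X i ∈ idealOfVars σ R ^ 2 :=
  sq (idealOfVars σ R) ▸
    Ideal.mul_mem_mul ((mem_idealOfVars_iff p).2 hp) (Ideal.subset_span ⟨i, rfl⟩)

end MvPolynomial

/-- If `φ ∈ k[s,x,y,z]` can be written both as `a·x + b·y` and as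
`c·(x−s) + d·z`, then `φ` lies in the square of the maximal ideal
`(s,x,y,z)` (here `s = X 0`, `x = X 1`, `y = X 2`, `z = X 3`). -/
theorem stmt_9 (k : Type*) [Field k] (φ a b c d : MvPolynomial (Fin 4) k)
    (h1 : φ = a * X 1 + b * X 2) (h2 : φ = c * (X 1 - X 0) + d * X 3) :
    φ ∈ (Ideal.span {X 0, X 1, X 2, X 3} : Ideal (MvPolynomial (Fin 4) k)) ^ 2 := by
  have hlin (j : Fin 4) : coeff (Finsupp.single j 1) (a * X 1 + b * X 2) =
      coeff (Finsupp.single j 1) (c * X 1 - c * X 0 + d * X 3) := by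
    rw [← h1, h2, mul_sub]
  simp only [coeff_add, coeff_sub, coeff_single_one_mul_X] at hlin
  have hc : constantCoeff c = 0 := by simpa using hlin 0
  have ha : constantCoeff a = 0 := by simpa [hc] using hlin 1
  have hb : constantCoeff b = 0 := by simpa using hlin 2
  rw [← idealOfVars_fin_four, h1]
  exact add_mem (mul_X_mem_idealOfVars_sq ha 1) (mul_X_mem_idealOfVars_sq hb 2)
end

section
/- In k[s,x,y,z], the ideal I = (y(x−s), xz, yz) equals the intersection (x,y) ∩ (y,z) ∩ (x−s, z) of the ideals of three 2-planes. -/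
open MvPolynomial

/-!
The substitution `s ↦ x - s` is an automorphism of `k[s,x,y,z]` carrying the monomial ideal
`(ys, xz, yz)` to `I` and the coordinate planes `(x,y)`, `(y,z)`, `(s,z)` to the three given
planes, so it suffices to treat the monomial case. There, membership is decided monomial by
monomial, and the equality becomes the Boolean identity
`(x ∨ y) ∧ (y ∨ z) ∧ (s ∨ z) ↔ (y ∧ s) ∨ (x ∧ z) ∨ (y ∧ z)` on the variables occurring in a monomial.
-/

theorem Finsupp.single_add_single_le_iff {σ : Type*} {i j : σ} (hij : i ≠ j) (m : σ →₀ ℕ) :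
    Finsupp.single i 1 + Finsupp.single j 1 ≤ m ↔ m i ≠ 0 ∧ m j ≠ 0 := by
  simp only [← Nat.one_le_iff_ne_zero]
  constructor
  · intro h
    exact ⟨by simpa [hij.symm] using h i, by simpa [hij] using h j⟩
  · rintro ⟨hi, hj⟩ a
    by_cases hai : a = i
    · subst hai; simpa [hij] using hi
    by_cases haj : a = j
    · subst haj; simpa [Ne.symm hai] using hj
    simp [Ne.symm hai, Ne.symm haj]

namespace MvPolynomial

variable {σ R : Type*}

section CommSemiring

variable [CommSemiring R]

theorem mem_ideal_span_X_mul_X_image {p : MvPolynomial σ R} {s : Set (σ × σ)}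
    (hs : ∀ q ∈ s, q.1 ≠ q.2) :
    p ∈ Ideal.span ((fun q => X q.1 * X q.2) '' s) ↔
      ∀ m ∈ p.support, ∃ q ∈ s, m q.1 ≠ 0 ∧ m q.2 ≠ 0 := by
  have hX : (fun q : σ × σ => (X q.1 * X q.2 : MvPolynomial σ R)) =
      (fun m => monomial m 1) ∘ fun q => Finsupp.single q.1 1 + Finsupp.single q.2 1 := by
    ext1 q; simp [X, monomial_mul]
  rw [hX, Set.image_comp, mem_ideal_span_monomial_image]
  refine forall₂_congr fun m _ => ?_
  simp only [Set.exists_mem_image]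
  exact exists_congr fun q => and_congr_right fun hq =>
    Finsupp.single_add_single_le_iff (hs q hq) m

theorem mem_ideal_span_X_pair {p : MvPolynomial σ R} {i j : σ} :
    p ∈ Ideal.span {X i, X j} ↔ ∀ m ∈ p.support, m i ≠ 0 ∨ m j ≠ 0 := by
  simpa [Set.image_insert_eq] using mem_ideal_span_X_image (x := p) (s := {i, j})

theorem span_X_mul_X_eq_inf {a b c d : σ} (hab : a ≠ b) (hcd : c ≠ d) (hbd : b ≠ d) :
    (Ideal.span {X b * X a, X c * X d, X b * X d} : Ideal (MvPolynomial σ R)) =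
      Ideal.span {X c, X b} ⊓ Ideal.span {X b, X d} ⊓ Ideal.span {X a, X d} := by
  have hgens : ({X b * X a, X c * X d, X b * X d} : Set (MvPolynomial σ R)) =
      (fun q => X q.1 * X q.2) '' {(b, a), (c, d), (b, d)} := by
    simp [Set.image_insert_eq]
  have hdistinct : ∀ q ∈ ({(b, a), (c, d), (b, d)} : Set (σ × σ)), q.1 ≠ q.2 := by
    simp [hab.symm, hcd, hbd]
  ext p
  simp only [hgens, Ideal.mem_inf, mem_ideal_span_X_mul_X_image hdistinct, mem_ideal_span_X_pair,
    ← forall₂_and]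
  refine forall₂_congr fun m _ => ?_
  simp only [Set.mem_insert_iff, Set.mem_singleton_iff, exists_eq_or_imp, exists_eq_left]
  tauto

end CommSemiring

section CommRing

variable (R) [CommRing R] [DecidableEq σ]

noncomputable def subXAlgEquiv {i j : σ} (hij : i ≠ j) : MvPolynomial σ R ≃ₐ[R] MvPolynomial σ R :=
  have hinv : (aeval (Function.update X i (X j - X i))).comp
      (aeval (Function.update X i (X j - X i))) = AlgHom.id R (MvPolynomial σ R) := by
    refine algHom_ext fun a => ?_
    by_cases hai : a = i
    · subst hai; simp [hij.symm]
    · simp [hai]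
  AlgEquiv.ofAlgHom _ _ hinv hinv

variable {R}

@[simp]
theorem subXAlgEquiv_X_self {i j : σ} (hij : i ≠ j) :
    subXAlgEquiv R hij (X i) = X j - X i := by
  simp [subXAlgEquiv]

@[simp]
theorem subXAlgEquiv_X_of_ne {i j a : σ} (hij : i ≠ j) (hai : a ≠ i) :
    subXAlgEquiv R hij (X a) = X a := by
  simp [subXAlgEquiv, hai]

end CommRing

end MvPolynomial

/-- In `k[s,x,y,z]` (with `s = X 0`, `x = X 1`, `y = X 2`, `z = X 3`),
the ideal `(y(x−s), xz, yz)` equals `(x,y) ∩ (y,z) ∩ (x−s,z)`. -/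
theorem stmt_12 (k : Type*) [Field k] :
    (Ideal.span {X 2 * (X 1 - X 0), X 1 * X 3, X 2 * X 3} :
        Ideal (MvPolynomial (Fin 4) k)) =
      Ideal.span {X 1, X 2} ⊓ Ideal.span {X 2, X 3} ⊓
        Ideal.span {X 1 - X 0, X 3} := by
  let e := (subXAlgEquiv k (show (0 : Fin 4) ≠ 1 by decide)).toRingEquiv
  have key := congrArg (Ideal.map (e : MvPolynomial (Fin 4) k →+* MvPolynomial (Fin 4) k))
    (span_X_mul_X_eq_inf (R := k) (a := 0) (b := 2) (c := 1) (d := 3)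
      (by decide) (by decide) (by decide))
  simp only [Ideal.map_comap_of_equiv, Ideal.comap_inf, Ideal.comap_symm, Ideal.map_span,
    Set.image_insert_eq, Set.image_singleton] at key
  simpa [e] using key
end

section
/- The quotient ring A = k[s,x,y,z]/(y(x−s), xz, yz) has no s-torsion: if φ ∈ k[s,x,y,z] satisfies s·φ ∈ (y(x−s), xz, yz), then φ ∈ (y(x−s), xz, yz). Consequently A is flat as a k[s]-module. -/
/-!
The ideal `(y(x−s), xz, yz)` is the intersection of the primes `(x, y)`, `(y, z)` and `(x−s, z)`
of the three planes, and each of these primes is the kernel of the retraction of `k[s,x,y,z]`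
onto the coordinate ring of its plane. The retractions fix `k[s]` and land in a domain, so a
nonzero `p(s)` is a nonzerodivisor modulo each prime, hence modulo their intersection.
Over the principal ideal domain `k[s]` this torsion-freeness is flatness.
-/

open MvPolynomial

noncomputable section

variable (k : Type*) [Field k]

/-- The ideal `(y(x−s), xz, yz)` of `k[s,x,y,z]`
(with `s = X 0`, `x = X 1`, `y = X 2`, `z = X 3`). -/
def threePlanesIdeal : Ideal (MvPolynomial (Fin 4) k) :=
  Ideal.span {X 2 * (X 1 - X 0), X 1 * X 3, X 2 * X 3}

/-- The coordinate ring `A = k[s,x,y,z]/(y(x−s), xz, yz)` of the union of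
the three 2-planes `{x=y=0}`, `{y=z=0}`, `{x−s=z=0}`. -/
abbrev threePlanesRing := MvPolynomial (Fin 4) k ⧸ threePlanesIdeal k

namespace MvPolynomial

variable {σ R : Type*} [CommRing R] {J : Ideal (MvPolynomial σ R)} {f : σ → MvPolynomial σ R}

theorem sub_aeval_mem_of_forall_X_sub_mem (hf : ∀ i, X i - f i ∈ J) (P : MvPolynomial σ R) :
    P - aeval f P ∈ J := by
  induction P using MvPolynomial.induction_on with
  | C a => simp
  | add P Q hP hQ =>
    rw [map_add, add_sub_add_comm]
    exact J.add_mem hP hQ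
  | mul_X P i hP =>
    have hsplit :
        P * X i - aeval f (P * X i) = (P - aeval f P) * X i + aeval f P * (X i - f i) := by
      rw [map_mul, aeval_X]; ring
    rw [hsplit]
    exact J.add_mem (J.mul_mem_right _ hP) (J.mul_mem_left _ (hf i))

theorem mem_of_aeval_eq_zero (hf : ∀ i, X i - f i ∈ J) {P : MvPolynomial σ R}
    (hP : aeval f P = 0) : P ∈ J := by
  simpa only [hP, sub_zero] using sub_aeval_mem_of_forall_X_sub_mem hf P

end MvPolynomial

section ThreePlanes

variable {k}

local notation "k[s,x,y,z]" => MvPolynomial (Fin 4) k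

/- The restrictions of functions to the planes `{x = y = 0}`, `{y = z = 0}` and `{x = s, z = 0}`,
as endomorphisms of `k[s,x,y,z]`. -/
def restrictXY : k[s,x,y,z] →ₐ[k] k[s,x,y,z] := aeval ![X 0, 0, 0, X 3]

def restrictYZ : k[s,x,y,z] →ₐ[k] k[s,x,y,z] := aeval ![X 0, X 1, 0, 0]

def restrictXZ : k[s,x,y,z] →ₐ[k] k[s,x,y,z] := aeval ![X 0, X 0, X 2, 0]

theorem mem_span_X_one_X_two_of_restrictXY_eq_zero {φ : k[s,x,y,z]} (h : restrictXY φ = 0) :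
    φ ∈ Ideal.span {X 1, X 2} :=
  mem_of_aeval_eq_zero (fun i => by fin_cases i <;> simp <;> exact Ideal.subset_span (by simp)) h

theorem mem_span_X_two_X_three_of_restrictYZ_eq_zero {φ : k[s,x,y,z]} (h : restrictYZ φ = 0) :
    φ ∈ Ideal.span {X 2, X 3} :=
  mem_of_aeval_eq_zero (fun i => by fin_cases i <;> simp <;> exact Ideal.subset_span (by simp)) h

theorem mem_span_X_one_sub_X_zero_X_three_of_restrictXZ_eq_zero {φ : k[s,x,y,z]}
    (h : restrictXZ φ = 0) : φ ∈ Ideal.span {X 1 - X 0, X 3} :=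
  mem_of_aeval_eq_zero (fun i => by fin_cases i <;> simp <;> exact Ideal.subset_span (by simp)) h

theorem mem_threePlanesIdeal_of_restrict_eq_zero {φ : k[s,x,y,z]} (hXY : restrictXY φ = 0)
    (hYZ : restrictYZ φ = 0) (hXZ : restrictXZ φ = 0) : φ ∈ threePlanesIdeal k := by
  obtain ⟨a, b, rfl⟩ := Ideal.mem_span_pair.mp
    (mem_span_X_one_sub_X_zero_X_three_of_restrictXZ_eq_zero hXZ)
  have ha : restrictYZ a = 0 := by
    have h : restrictYZ a * (X 1 - X 0) = 0 := by simpa [restrictYZ] using hYZ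
    exact (mul_eq_zero.mp h).resolve_right (sub_ne_zero.mpr (X_injective.ne (by decide)))
  obtain ⟨u, v, rfl⟩ := Ideal.mem_span_pair.mp (mem_span_X_two_X_three_of_restrictYZ_eq_zero ha)
  set w := v * (X 1 - X 0) + b
  have hφ : (u * X 2 + v * X 3) * (X 1 - X 0) + b * X 3 = u * (X 2 * (X 1 - X 0)) + X 3 * w := by
    ring
  have hw : restrictXY w = 0 := by
    have h : X 3 * restrictXY w = 0 := by simpa [hφ, restrictXY] using hXY
    exact (mul_eq_zero.mp h).resolve_left (X_ne_zero 3)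
  obtain ⟨c, d, hcd⟩ := Ideal.mem_span_pair.mp (mem_span_X_one_X_two_of_restrictXY_eq_zero hw)
  rw [hφ, ← hcd, threePlanesIdeal]
  have hexpand : u * (X 2 * (X 1 - X 0)) + X 3 * (c * X 1 + d * X 2) =
      u * (X 2 * (X 1 - X 0)) + c * (X 1 * X 3) + d * (X 2 * X 3) := by ring
  rw [hexpand]
  refine Ideal.add_mem _ (Ideal.add_mem _ ?_ ?_) ?_ <;>
    exact Ideal.mul_mem_left _ _ (Ideal.subset_span (by simp))

theorem mem_threePlanesIdeal_iff {φ : k[s,x,y,z]} :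
    φ ∈ threePlanesIdeal k ↔ restrictXY φ = 0 ∧ restrictYZ φ = 0 ∧ restrictXZ φ = 0 := by
  refine ⟨fun h => ⟨?_, ?_, ?_⟩, fun ⟨hXY, hYZ, hXZ⟩ =>
    mem_threePlanesIdeal_of_restrict_eq_zero hXY hYZ hXZ⟩ <;>
  · refine RingHom.mem_ker.mp (Ideal.span_le.mpr ?_ h)
    simp [Set.insert_subset_iff, restrictXY, restrictYZ, restrictXZ]

theorem toMvPolynomial_mul_mem_threePlanesIdeal_iff {p : Polynomial k} (hp : p ≠ 0)
    {φ : k[s,x,y,z]} :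
    p.toMvPolynomial 0 * φ ∈ threePlanesIdeal k ↔ φ ∈ threePlanesIdeal k := by
  have hfix (f : Fin 4 → k[s,x,y,z]) (hf : f 0 = X 0) :
      aeval f (p.toMvPolynomial 0) = p.toMvPolynomial 0 := by
    rw [aeval_toMvPolynomial, hf]; rfl
  have hp' : (p.toMvPolynomial 0 : k[s,x,y,z]) ≠ 0 :=
    (map_ne_zero_iff _ (Polynomial.toMvPolynomial_injective 0)).mpr hp
  simp only [mem_threePlanesIdeal_iff, map_mul, restrictXY, restrictYZ, restrictXZ,
    hfix ![X 0, 0, 0, X 3] rfl, hfix ![X 0, X 1, 0, 0] rfl, hfix ![X 0, X 0, X 2, 0] rfl,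
    mul_eq_zero, hp', false_or]

end ThreePlanes

/-- `A = k[s,x,y,z]/(y(x−s), xz, yz)` has no `s`-torsion:
`s·φ ∈ (y(x−s), xz, yz)` implies `φ ∈ (y(x−s), xz, yz)`.
Consequently `A` is flat over `k[s]` (acting via `s ↦` the class of `s`). -/
theorem stmt_13 :
    (∀ φ : MvPolynomial (Fin 4) k,
      X 0 * φ ∈ threePlanesIdeal k → φ ∈ threePlanesIdeal k) ∧
    (letI : Algebra (Polynomial k) (threePlanesRing k) :=
        ((Polynomial.aeval
          (Ideal.Quotient.mk (threePlanesIdeal k) (X 0))).toRingHom).toAlgebra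
     Module.Flat (Polynomial k) (threePlanesRing k)) := by
  refine ⟨fun φ h => (toMvPolynomial_mul_mem_threePlanesIdeal_iff Polynomial.X_ne_zero).mp
    (by rwa [Polynomial.toMvPolynomial_X]), ?_⟩
  let : Algebra (Polynomial k) (threePlanesRing k) :=
    ((Polynomial.aeval (Ideal.Quotient.mk (threePlanesIdeal k) (X 0))).toRingHom).toAlgebra
  have halg (p : Polynomial k) : algebraMap (Polynomial k) (threePlanesRing k) p =
      Ideal.Quotient.mk (threePlanesIdeal k) (p.toMvPolynomial 0) :=
    Polynomial.aeval_algHom_apply (Ideal.Quotient.mkₐ k (threePlanesIdeal k)) (X 0) p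
  have : Module.IsTorsionFree (Polynomial k) (threePlanesRing k) :=
    .of_smul_eq_zero fun p m hpm => by
      obtain ⟨φ, rfl⟩ := Ideal.Quotient.mk_surjective m
      rw [Algebra.smul_def, halg, ← map_mul, Ideal.Quotient.eq_zero_iff_mem] at hpm
      rw [Ideal.Quotient.eq_zero_iff_mem]
      exact or_iff_not_imp_left.mpr fun hp =>
        (toMvPolynomial_mul_mem_threePlanesIdeal_iff hp).mp hpm
  infer_instance

end
end

section
/- Let R be a commutative ring and f₁, f₂, f₃, f₄ a regular sequence in R. If φ ∈ R satisfies φ ∈ (f₁, f₂) ∩ (f₃, f₄), then φ ∈ (f₁f₃, f₁f₄, f₂f₃, f₂f₄) + ((f₁,f₂)·(f₃,f₄)); equivalently, (f₁,f₂) ∩ (f₃,f₄) = (f₁,f₂)·(f₃,f₄). -/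
open Ideal RingTheory.Sequence

section

variable {R : Type*} [CommRing R]

/-- Write `φ = c g + d h ∈ I`. Regularity of `h` modulo `I + (g)` gives `d = i + e g` with `i ∈ I`,
so `φ = (c + e h) g + i h`, and regularity of `g` modulo `I` gives `c + e h ∈ I`. -/
theorem Ideal.inf_span_pair_eq_mul_of_isSMulRegular (I : Ideal R) {g h : R}
    (hg : IsSMulRegular (R ⧸ I) g) (hh : IsSMulRegular (R ⧸ (I ⊔ span {g})) h) :
    I ⊓ span {g, h} = I * span {g, h} := by
  refine le_antisymm (fun φ ⟨hφI, hφ⟩ => ?_) mul_le_inf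
  obtain ⟨c, d, rfl⟩ := mem_span_pair.mp hφ
  have hd : d ∈ I ⊔ span {g} := by
    refine mem_of_isSMulRegular_quotient_of_smul_mem hh ?_
    have : h • d = (c * g + d * h) - c * g := by rw [smul_eq_mul]; ring
    rw [this]
    exact sub_mem (mem_sup_left hφI) (mem_sup_right (mem_span_singleton.mpr (dvd_mul_left g c)))
  obtain ⟨i, hi, _, he, rfl⟩ := Submodule.mem_sup.mp hd
  obtain ⟨e, rfl⟩ := mem_span_singleton'.mp he
  have hc : c + e * h ∈ I := by
    refine mem_of_isSMulRegular_quotient_of_smul_mem hg ?_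
    have : g • (c + e * h) = (c * g + (i + e * g) * h) - h * i := by rw [smul_eq_mul]; ring
    rw [this]
    exact sub_mem hφI (I.mul_mem_left h hi)
  have : c * g + (i + e * g) * h = (c + e * h) * g + i * h := by ring
  rw [this]
  exact add_mem (mul_mem_mul hc (subset_span (by simp))) (mul_mem_mul hi (subset_span (by simp)))

theorem RingTheory.Sequence.IsWeaklyRegular.isSMulRegular_quotient_ofList_take {rs : List R}
    (hrs : IsWeaklyRegular R rs) (i : ℕ) (hi : i < rs.length) :
    IsSMulRegular (R ⧸ ofList (rs.take i)) rs[i] := by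
  have := hrs.regular_mod_prev i hi
  rwa [smul_eq_mul, Ideal.mul_top] at this

theorem RingTheory.Sequence.IsWeaklyRegular.ofList_inf_span_pair_eq_mul {rs : List R} {g h : R}
    (hrs : IsWeaklyRegular R (rs ++ [g, h])) :
    ofList rs ⊓ span {g, h} = ofList rs * span {g, h} := by
  refine inf_span_pair_eq_mul_of_isSMulRegular _ ?_ ?_
  · have := hrs.isSMulRegular_quotient_ofList_take rs.length (by simp)
    rw [List.take_left' rfl] at this
    simpa using this
  · have := hrs.isSMulRegular_quotient_ofList_take (rs.length + 1) (by simp)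
    rw [List.take_length_add_append, ofList_append, show [g, h].take 1 = [g] from rfl,
      ofList_singleton] at this
    simpa using this

end

/-- If `f₁, f₂, f₃, f₄` is a regular sequence in a commutative ring `R`,
then `(f₁,f₂) ∩ (f₃,f₄) = (f₁,f₂)·(f₃,f₄)`. -/
theorem stmt_16 (R : Type*) [CommRing R] (f₁ f₂ f₃ f₄ : R)
    (hreg : RingTheory.Sequence.IsRegular R [f₁, f₂, f₃, f₄]) :
    (Ideal.span {f₁, f₂} ⊓ Ideal.span {f₃, f₄} : Ideal R) =
      Ideal.span {f₁, f₂} * Ideal.span {f₃, f₄} := by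
  have hpair : ofList [f₁, f₂] = span {f₁, f₂} := by
    rw [ofList_cons, ofList_singleton, span_insert]
  simpa only [hpair] using
    IsWeaklyRegular.ofList_inf_span_pair_eq_mul (rs := [f₁, f₂]) hreg.toIsWeaklyRegular
end
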